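/- arXiv:2209.13208 — 4 statements merged into one kernel-verified Lean document; each statement's English description precedes it below -/
import Mathlib

section
/- Suppose D = dH − Σ_i m_i E_i − Σ_{i<j} m_{ij} E_{ij} satisfies the boundary inequalities and moreover d = m_{12} + m_{34}. Then: m_1 = m_2 = m_{12}; m_3 = m_4 = m_{34}; m_5 ≤ m_{12} and m_5 ≤ m_{34}; m_{15} = m_{25} = m_{35} = m_{45} = 0; m_{12} ≥ m_{13} + m_{14}; m_{12} ≥ m_{23} + m_{24}; m_{34} ≥ m_{13} + m_{23}; and m_{34} ≥ m_{14} + m_{24}. (The derived equalities at the start of Case 2 of the proof of Theorem 1.3 for n = 6.) -/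
open Finset

/-- Index type for the Kapranov basis of `Pic(M̄₀,₆) ⊗ ℝ`:
`H`, `E_i` (i ∈ Fin 5), and `E_{ij}` for `i < j`. -/
abbrev PairIdx : Type := {p : Fin 5 × Fin 5 // p.1 < p.2}

abbrev Idx : Type := Unit ⊕ Fin 5 ⊕ PairIdx

/-- The 16-dimensional real vector space `N¹(M̄₀,₆)`. -/
abbrev V : Type := Idx → ℝ

noncomputable section

/-- The hyperplane class `H`. -/
def bH : V := fun k => if k = Sum.inl () then 1 else 0

/-- The exceptional class `E_i` over the point `p_i`. -/
def bE (i : Fin 5) : V := fun k => if k = Sum.inr (Sum.inl i) then 1 else 0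

/-- The exceptional class `E_{ij} = E_{ji}` over the line `l_{ij}` (for `i ≠ j`). -/
def bEE (i j : Fin 5) : V := fun k =>
  match k with
  | Sum.inr (Sum.inr p) =>
      if (p.1.1 = i ∧ p.1.2 = j) ∨ (p.1.1 = j ∧ p.1.2 = i) then 1 else 0
  | _ => 0

/-- `D = d·H − Σᵢ mᵢ Eᵢ − Σ_{i<j} m_{ij} E_{ij}`. -/
def Dvec (d : ℝ) (m : Fin 5 → ℝ) (mm : Fin 5 → Fin 5 → ℝ) : V :=
  d • bH - ∑ i, m i • bE i - ∑ p : PairIdx, mm p.1.1 p.1.2 • bEE p.1.1 p.1.2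

/-- The boundary inequalities: `D` restricts to an effective class on each
boundary divisor of `M̄₀,₆`. -/
def BoundaryIneqs (d : ℝ) (m : Fin 5 → ℝ) (mm : Fin 5 → Fin 5 → ℝ) : Prop :=
  (∀ i j, i ≠ j → mm i j ≤ m i) ∧
  (∀ i, (∑ j ∈ univ.filter (fun j => j ≠ i), mm i j) ≤ 2 * m i) ∧
  (∀ i j k, i ≠ j → i ≠ k → j ≠ k → m i + mm j k ≤ d) ∧
  (∀ i j k h l : Fin 5, ({i, j, k, h, l} : Finset (Fin 5)) = univ →
    m i + m j + m k + mm h l ≤ 2 * d) ∧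
  (∀ i j k h l : Fin 5, ({i, j, k, h, l} : Finset (Fin 5)) = univ →
    mm i j + mm i k + mm j k + mm h l ≤ d) ∧
  (∀ i j, i ≠ j → 0 ≤ mm i j) ∧
  (∀ i j, i ≠ j → m i + m j ≤ d + mm i j)

/-- The boundary class `Δ_{ijk}`. -/
def Delta (i j k : Fin 5) : V :=
  bH - bE i - bE j - bE k - bEE i j - bEE i k - bEE j k

/-- The Keel–Vermeire class `KV_{ij,kh}`. -/
def KV (i j k h : Fin 5) : V :=
  (2 : ℝ) • bH - ∑ a, bE a - bEE i k - bEE i h - bEE j k - bEE j h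

/-- The 25 boundary classes `E_i`, `E_{ij}`, `Δ_{ijk}`. -/
def BoundaryClasses : Set V :=
  {v | (∃ i, v = bE i) ∨ (∃ i j, i ≠ j ∧ v = bEE i j) ∨
    (∃ i j k, i ≠ j ∧ i ≠ k ∧ j ≠ k ∧ v = Delta i j k)}

/-- The 15 Keel–Vermeire classes. -/
def KVClasses : Set V :=
  {v | ∃ i j k h : Fin 5, i ≠ j ∧ i ≠ k ∧ i ≠ h ∧ j ≠ k ∧ j ≠ h ∧ k ≠ h ∧
    v = KV i j k h}

/-- `v` is a nonnegative real linear combination of elements of `S`. -/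
def IsNonnegCombi (S : Set V) (v : V) : Prop :=
  ∃ (n : ℕ) (c : Fin n → ℝ) (g : Fin n → V),
    (∀ t, 0 ≤ c t) ∧ (∀ t, g t ∈ S) ∧ v = ∑ t, c t • g t

end

/-- **Start of Case 2 of the proof of Theorem 1.3 (n = 6).**  Paper indices
`1,2,3,4,5` correspond to `0,1,2,3,4 : Fin 5`.  If `D` satisfies the boundary
inequalities and `d = m_{12} + m_{34}`, then `m₁ = m₂ = m_{12}`,
`m₃ = m₄ = m_{34}`, `m₅ ≤ min(m_{12}, m_{34})`, `m_{i5} = 0` for all `i`,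
`m_{12} ≥ m_{13} + m_{14}`, `m_{12} ≥ m_{23} + m_{24}`,
`m_{34} ≥ m_{13} + m_{23}`, and `m_{34} ≥ m_{14} + m_{24}`. -/
theorem case2_derived_equalities
    (d : ℝ) (m : Fin 5 → ℝ) (mm : Fin 5 → Fin 5 → ℝ)
    (hsymm : ∀ i j, mm i j = mm j i)
    (h : BoundaryIneqs d m mm)
    (hd : d = mm 0 1 + mm 2 3) :
    m 0 = mm 0 1 ∧ m 1 = mm 0 1 ∧
    m 2 = mm 2 3 ∧ m 3 = mm 2 3 ∧
    m 4 ≤ mm 0 1 ∧ m 4 ≤ mm 2 3 ∧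
    mm 0 4 = 0 ∧ mm 1 4 = 0 ∧ mm 2 4 = 0 ∧ mm 3 4 = 0 ∧
    mm 0 2 + mm 0 3 ≤ mm 0 1 ∧
    mm 1 2 + mm 1 3 ≤ mm 0 1 ∧
    mm 0 2 + mm 1 2 ≤ mm 2 3 ∧
    mm 0 3 + mm 1 3 ≤ mm 2 3 := by
  obtain ⟨h1, h2, h3, h4, h5, h6, h7⟩ := h
  have s01 := hsymm 0 1
  have s02 := hsymm 0 2
  have s03 := hsymm 0 3
  have s04 := hsymm 0 4
  have s12 := hsymm 1 2
  have s13 := hsymm 1 3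
  have s14 := hsymm 1 4
  have s23 := hsymm 2 3
  have s24 := hsymm 2 4
  have s34 := hsymm 3 4
  have e0 : m 0 = mm 0 1 := le_antisymm (by have := h3 0 2 3 (by decide) (by decide) (by decide); linarith) (h1 0 1 (by decide))
  have e1 : m 1 = mm 0 1 := le_antisymm (by have := h3 1 2 3 (by decide) (by decide) (by decide); linarith) (by have := h1 1 0 (by decide); linarith)
  have e2 : m 2 = mm 2 3 := le_antisymm (by have := h3 2 0 1 (by decide) (by decide) (by decide); linarith) (h1 2 3 (by decide))
  have e3 : m 3 = mm 2 3 := le_antisymm (by have := h3 3 0 1 (by decide) (by decide) (by decide); linarith) (by have := h1 3 2 (by decide); linarith)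
  have e4a : m 4 ≤ mm 0 1 := by have := h3 4 2 3 (by decide) (by decide) (by decide); linarith
  have e4b : m 4 ≤ mm 2 3 := by have := h3 4 0 1 (by decide) (by decide) (by decide); linarith
  have q1 : mm 0 4 + mm 1 4 ≤ 0 := by
    have := h5 0 1 4 2 3 (by decide); linarith
  have q2 : mm 2 4 + mm 3 4 ≤ 0 := by
    have := h5 2 3 4 0 1 (by decide); linarith
  have z04 : mm 0 4 = 0 := le_antisymm (by have := h6 1 4 (by decide); linarith) (h6 0 4 (by decide))
  have z14 : mm 1 4 = 0 := le_antisymm (by have := h6 0 4 (by decide); linarith) (h6 1 4 (by decide))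
  have z24 : mm 2 4 = 0 := le_antisymm (by have := h6 3 4 (by decide); linarith) (h6 2 4 (by decide))
  have z34 : mm 3 4 = 0 := le_antisymm (by have := h6 2 4 (by decide); linarith) (h6 3 4 (by decide))
  have t0 := h2 0
  have t1 := h2 1
  have t2 := h2 2
  have t3 := h2 3
  simp [Finset.sum_filter, Fin.sum_univ_five] at t0 t1 t2 t3
  refine ⟨e0, e1, e2, e3, e4a, e4b, z04, z14, z24, z34, ?_, ?_, ?_, ?_⟩ <;> linarith
end

section
/- Suppose D = dH − Σ_i m_i E_i − Σ_{i<j} m_{ij} E_{ij} satisfies the boundary inequalities and moreover d = m_{12} + m_{34}, m_{34} = m_{13} + m_{23} = m_{14} + m_{24}, and d = m_{34} + m_5. Then m_{12} = m_{34} = m_5 = d/2, m_{14} = m_{23}, m_{13} = m_{24}, and D = m_{13}·KV_{14,23} + m_{14}·KV_{13,24}, where KV_{14,23} = 2H − Σ_α E_α − E_{12} − E_{13} − E_{24} − E_{34} and KV_{13,24} = 2H − Σ_α E_α − E_{12} − E_{14} − E_{23} − E_{34}. (A computation in Case 2 of the proof of Theorem 1.3 for n = 6.) -/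
open Finset

lemma sum_pairIdx (g : Fin 5 → Fin 5 → V) :
    ∑ p : PairIdx, g p.1.1 p.1.2 =
      g 0 1 + g 0 2 + g 0 3 + g 0 4 + g 1 2 + g 1 3 + g 1 4 + g 2 3 + g 2 4 + g 3 4 := by
  rw [← Finset.sum_subtype (Finset.univ.filter (fun p : Fin 5 × Fin 5 => p.1 < p.2))
    (by simp) (fun p => g p.1 p.2)]
  simp [Finset.sum_filter, Fintype.sum_prod_type, Fin.sum_univ_five]
  abel

/-- **A computation in Case 2 of the proof of Theorem 1.3 (n = 6).**
Paper indices `1,2,3,4,5` correspond to `0,1,2,3,4 : Fin 5`.  If `D` satisfies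
the boundary inequalities, `d = m_{12} + m_{34}`,
`m_{34} = m_{13} + m_{23} = m_{14} + m_{24}`, and `d = m_{34} + m₅`, then
`m_{12} = m_{34} = m₅ = d/2`, `m_{14} = m_{23}`, `m_{13} = m_{24}`, and
`D = m_{13}·KV_{14,23} + m_{14}·KV_{13,24}`. -/
theorem case2_KV_computation
    (d : ℝ) (m : Fin 5 → ℝ) (mm : Fin 5 → Fin 5 → ℝ)
    (hsymm : ∀ i j, mm i j = mm j i)
    (h : BoundaryIneqs d m mm)
    (hd : d = mm 0 1 + mm 2 3)
    (h1 : mm 2 3 = mm 0 2 + mm 1 2)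
    (h2 : mm 2 3 = mm 0 3 + mm 1 3)
    (h3 : d = mm 2 3 + m 4) :
    mm 0 1 = d / 2 ∧ mm 2 3 = d / 2 ∧ m 4 = d / 2 ∧
    mm 0 3 = mm 1 2 ∧ mm 0 2 = mm 1 3 ∧
    Dvec d m mm =
      mm 0 2 • ((2 : ℝ) • bH - ∑ a, bE a - bEE 0 1 - bEE 0 2 - bEE 1 3 - bEE 2 3)
      + mm 0 3 • ((2 : ℝ) • bH - ∑ a, bE a - bEE 0 1 - bEE 0 3 - bEE 1 2 - bEE 2 3) := by

  obtain ⟨hA, hB, hC, hD4, hD5, hF, hG⟩ := h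
  have e1 := hD5 0 1 2 3 4 (by decide)
  have e2 := hD5 0 1 3 2 4 (by decide)
  have e3 := hD5 0 2 3 1 4 (by decide)
  have e4 := hD5 1 2 3 0 4 (by decide)
  have c1 := hC 4 0 1 (by decide) (by decide) (by decide)
  have f04 := hF 0 4 (by decide)
  have f14 := hF 1 4 (by decide)
  have f24 := hF 2 4 (by decide)
  have f34 := hF 3 4 (by decide)
  have s10 := hsymm 1 0
  have s32 := hsymm 3 2
  have a01 := hA 0 1 (by decide)
  have a10 := hA 1 0 (by decide)
  have a23 := hA 2 3 (by decide)
  have a32 := hA 3 2 (by decide)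
  have c023 := hC 0 2 3 (by decide) (by decide) (by decide)
  have c123 := hC 1 2 3 (by decide) (by decide) (by decide)
  have c201 := hC 2 0 1 (by decide) (by decide) (by decide)
  have c301 := hC 3 0 1 (by decide) (by decide) (by decide)
  have hm01 : mm 0 1 = mm 0 2 + mm 0 3 := by linarith
  have hm23 : mm 2 3 = mm 0 2 + mm 0 3 := by linarith
  have hm12 : mm 1 2 = mm 0 3 := by linarith
  have hm13 : mm 1 3 = mm 0 2 := by linarith
  have hm04 : mm 0 4 = 0 := by linarith
  have hm14 : mm 1 4 = 0 := by linarith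
  have hm24 : mm 2 4 = 0 := by linarith
  have hm34 : mm 3 4 = 0 := by linarith
  have hdv : d = 2 * mm 0 2 + 2 * mm 0 3 := by linarith
  have hm0 : m 0 = mm 0 2 + mm 0 3 := by linarith
  have hm1 : m 1 = mm 0 2 + mm 0 3 := by linarith
  have hm2 : m 2 = mm 0 2 + mm 0 3 := by linarith
  have hm3 : m 3 = mm 0 2 + mm 0 3 := by linarith
  have hm4 : m 4 = mm 0 2 + mm 0 3 := by linarith
  refine ⟨by linarith, by linarith, by linarith, by linarith, by linarith, ?_⟩
  rw [Dvec]
  rw [show (∑ p : PairIdx, mm p.1.1 p.1.2 • bEE p.1.1 p.1.2) =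
      mm 0 1 • bEE 0 1 + mm 0 2 • bEE 0 2 + mm 0 3 • bEE 0 3 + mm 0 4 • bEE 0 4 +
      mm 1 2 • bEE 1 2 + mm 1 3 • bEE 1 3 + mm 1 4 • bEE 1 4 + mm 2 3 • bEE 2 3 +
      mm 2 4 • bEE 2 4 + mm 3 4 • bEE 3 4 from sum_pairIdx (fun a b => mm a b • bEE a b)]
  simp only [Fin.sum_univ_five]
  rw [hdv, hm0, hm1, hm2, hm3, hm4, hm01, hm23, hm12, hm13, hm04, hm14, hm24, hm34]
  module
end

section
/- Suppose D = dH − Σ_i m_i E_i − Σ_{i<j} m_{ij} E_{ij} satisfies the boundary inequalities and moreover 2d = m_{12} + m_{13} + m_{14} + m_{25} + m_{35} + m_{45}. Then: m_{23} = m_{24} = m_{34} = 0; m_{1i} = m_{i5} for i ∈ {2,3,4}; m_1 = m_5; d = m_1 + m_5 − m_{15}; 2m_1 = m_{12} + m_{13} + m_{14} + m_{15}; and d = m_{12} + m_{13} + m_{14}. (The derived equalities at the start of Case 3 of the proof of Theorem 1.3 for n = 6.) -/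
open Finset

/-- **Start of Case 3 of the proof of Theorem 1.3 (n = 6).**  Paper indices
`1,2,3,4,5` correspond to `0,1,2,3,4 : Fin 5`.  If `D` satisfies the boundary
inequalities and `2d = m_{12} + m_{13} + m_{14} + m_{25} + m_{35} + m_{45}`,
then `m_{23} = m_{24} = m_{34} = 0`, `m_{1i} = m_{i5}` for `i ∈ {2,3,4}`,
`m₁ = m₅`, `d = m₁ + m₅ − m_{15}`, `2m₁ = m_{12} + m_{13} + m_{14} + m_{15}`,
and `d = m_{12} + m_{13} + m_{14}`. -/
theorem case3_derived_equalities
    (d : ℝ) (m : Fin 5 → ℝ) (mm : Fin 5 → Fin 5 → ℝ)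
    (hsymm : ∀ i j, mm i j = mm j i)
    (h : BoundaryIneqs d m mm)
    (hd : 2 * d = mm 0 1 + mm 0 2 + mm 0 3 + mm 1 4 + mm 2 4 + mm 3 4) :
    mm 1 2 = 0 ∧ mm 1 3 = 0 ∧ mm 2 3 = 0 ∧
    mm 0 1 = mm 1 4 ∧ mm 0 2 = mm 2 4 ∧ mm 0 3 = mm 3 4 ∧
    m 0 = m 4 ∧
    d = m 0 + m 4 - mm 0 4 ∧
    2 * m 0 = mm 0 1 + mm 0 2 + mm 0 3 + mm 0 4 ∧
    d = mm 0 1 + mm 0 2 + mm 0 3 := by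
  obtain ⟨h1, h2, h3, h4, h5, h6, h7⟩ := h
  have A1 : mm 0 1 + mm 0 2 + mm 1 2 + mm 3 4 ≤ d := h5 0 1 2 3 4 (by decide)
  have A2 : mm 1 4 + mm 1 2 + mm 4 2 + mm 0 3 ≤ d := h5 1 4 2 0 3 (by decide)
  have B1 : mm 0 1 + mm 0 3 + mm 1 3 + mm 2 4 ≤ d := h5 0 1 3 2 4 (by decide)
  have B2 : mm 1 4 + mm 1 3 + mm 4 3 + mm 0 2 ≤ d := h5 1 4 3 0 2 (by decide)
  have C1 : mm 0 2 + mm 0 3 + mm 2 3 + mm 1 4 ≤ d := h5 0 2 3 1 4 (by decide)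
  have C2 : mm 2 4 + mm 2 3 + mm 4 3 + mm 0 1 ≤ d := h5 2 4 3 0 1 (by decide)
  have s42 := hsymm 4 2
  have s43 := hsymm 4 3
  have n12 : (0:ℝ) ≤ mm 1 2 := h6 1 2 (by decide)
  have n13 : (0:ℝ) ≤ mm 1 3 := h6 1 3 (by decide)
  have n23 : (0:ℝ) ≤ mm 2 3 := h6 2 3 (by decide)
  have e12 : mm 1 2 = 0 := by linarith
  have e13 : mm 1 3 = 0 := by linarith
  have e23 : mm 2 3 = 0 := by linarith
  have e01 : mm 0 1 = mm 1 4 := by linarith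
  have e02 : mm 0 2 = mm 2 4 := by linarith
  have e03 : mm 0 3 = mm 3 4 := by linarith
  have ed : d = mm 0 1 + mm 0 2 + mm 0 3 := by linarith
  have S0 := h2 0
  have S4 := h2 4
  rw [show (univ.filter (fun j => j ≠ (0 : Fin 5))) = {1, 2, 3, 4} by decide] at S0
  rw [show (univ.filter (fun j => j ≠ (4 : Fin 5))) = {0, 1, 2, 3} by decide] at S4
  simp [Finset.sum_insert, Finset.mem_insert] at S0 S4
  -- S0 : mm 0 1 + mm 0 2 + mm 0 3 + mm 0 4 ≤ 2 * m 0
  -- S4 : mm 4 0 + mm 4 1 + mm 4 2 + mm 4 3 ≤ 2 * m 4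
  have s40 := hsymm 4 0
  have s41 := hsymm 4 1
  have H7 := h7 0 4 (by decide)
  have hm04 : m 0 = m 4 := by linarith
  refine ⟨e12, e13, e23, e01, e02, e03, hm04, by linarith, by linarith, ed⟩
end

section
/- Suppose real numbers d, m_i (1 ≤ i ≤ 5), m_{ij} = m_{ji} satisfy the equalities: m_{1i} = m_{i5} for i ∈ {2,3,4}; m_1 = m_5; d = m_1 + m_5 − m_{15}; 2m_1 = m_{12} + m_{13} + m_{14} + m_{15}; m_{ij} = 0 for all i < j in {2,3,4}; d = m_{12} + m_{13} + m_{14}; together with the inequalities: d ≥ m_i + m_j for all i ≠ j in {2,3,4}; m_i ≥ m_{1i} for i ∈ {2,3,4}; d ≥ m_1 + m_{i5} for i ∈ {2,3,4}; m_{1i} ≥ 0 for i ∈ {2,3,4,5}; 2d ≥ m_1 + m_5 + m_i for i ∈ {2,3,4}; d − m_1 − m_i + m_{1i} ≥ 0 for i ∈ {2,3,4}; and 2d ≥ m_2 + m_3 + m_4 + m_{15}. Then D = dH − Σ_i m_i E_i − Σ_{i<j} m_{ij} E_{ij} satisfies all of the boundary inequalities, and 2d = m_{12} + m_{13} + m_{14}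 + m_{25} + m_{35} + m_{45}. (The Claim in Case 3 of the proof of Theorem 1.3 for n = 6.) -/
open Finset

lemma fin5_cases (i : Fin 5) : i = 0 ∨ i = 1 ∨ i = 2 ∨ i = 3 ∨ i = 4 := by
  revert i; decide

open Finset in
lemma aux_card_le_four (a b c e : Fin 5) : ({a,b,c,e} : Finset (Fin 5)).card ≤ 4 := by
  have h1 := Finset.card_insert_le a ({b,c,e} : Finset (Fin 5))
  have h2 := Finset.card_insert_le b ({c,e} : Finset (Fin 5))
  have h3 := Finset.card_insert_le c ({e} : Finset (Fin 5))
  have h4 : ({e} : Finset (Fin 5)).card = 1 := Finset.card_singleton e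
  omega

open Finset in
lemma aux_not_univ {s : Finset (Fin 5)} {a b c e : Fin 5}
    (h : s ⊆ {a,b,c,e}) : s ≠ univ := by
  intro he
  have h1 := Finset.card_le_card h
  have h2 := aux_card_le_four a b c e
  rw [he] at h1
  simp [Finset.card_univ] at h1
  omega

open Finset in
lemma five_distinct {i j k h l : Fin 5}
    (hs : ({i,j,k,h,l} : Finset (Fin 5)) = univ) :
    i ≠ j ∧ i ≠ k ∧ i ≠ h ∧ i ≠ l ∧ j ≠ k ∧ j ≠ h ∧ j ≠ l ∧ k ≠ h ∧ k ≠ l ∧ h ≠ l := by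
  refine ⟨?_, ?_, ?_, ?_, ?_, ?_, ?_, ?_, ?_, ?_⟩ <;>
    · rintro rfl
      exact aux_not_univ (by intro x hx; simp at hx ⊢; tauto) hs

set_option maxHeartbeats 4000000 in
/-- **The Claim in Case 3 of the proof of Theorem 1.3 (n = 6).**  Paper indices
`1,2,3,4,5` correspond to `0,1,2,3,4 : Fin 5`; in particular "`i ∈ {2,3,4}`"
becomes `i ≠ 0 ∧ i ≠ 4`.  Real numbers satisfying the listed equalities and
inequalities satisfy all of the boundary inequalities, together with
`2d = m_{12} + m_{13} + m_{14} + m_{25} + m_{35} + m_{45}`. -/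
theorem case3_claim
    (d : ℝ) (m : Fin 5 → ℝ) (mm : Fin 5 → Fin 5 → ℝ)
    (hsymm : ∀ i j, mm i j = mm j i)
    (he1 : ∀ i : Fin 5, i ≠ 0 → i ≠ 4 → mm 0 i = mm i 4)
    (he2 : m 0 = m 4)
    (he3 : d = m 0 + m 4 - mm 0 4)
    (he4 : 2 * m 0 = mm 0 1 + mm 0 2 + mm 0 3 + mm 0 4)
    (he5 : ∀ i j : Fin 5, i ≠ 0 → i ≠ 4 → j ≠ 0 → j ≠ 4 → i ≠ j → mm i j = 0)
    (he6 : d = mm 0 1 + mm 0 2 + mm 0 3)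
    (hi1 : ∀ i j : Fin 5, i ≠ 0 → i ≠ 4 → j ≠ 0 → j ≠ 4 → i ≠ j → m i + m j ≤ d)
    (hi2 : ∀ i : Fin 5, i ≠ 0 → i ≠ 4 → mm 0 i ≤ m i)
    (hi3 : ∀ i : Fin 5, i ≠ 0 → i ≠ 4 → m 0 + mm i 4 ≤ d)
    (hi4 : ∀ i : Fin 5, i ≠ 0 → 0 ≤ mm 0 i)
    (hi5 : ∀ i : Fin 5, i ≠ 0 → i ≠ 4 → m 0 + m 4 + m i ≤ 2 * d)
    (hi6 : ∀ i : Fin 5, i ≠ 0 → i ≠ 4 → 0 ≤ d - m 0 - m i + mm 0 i)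
    (hi7 : m 1 + m 2 + m 3 + mm 0 4 ≤ 2 * d) :
    BoundaryIneqs d m mm ∧
    2 * d = mm 0 1 + mm 0 2 + mm 0 3 + mm 1 4 + mm 2 4 + mm 3 4 := by
  
  have s10 : mm 1 0 = mm 0 1 := hsymm 1 0
  have s20 : mm 2 0 = mm 0 2 := hsymm 2 0
  have s30 : mm 3 0 = mm 0 3 := hsymm 3 0
  have s40 : mm 4 0 = mm 0 4 := hsymm 4 0
  have s21 : mm 2 1 = mm 1 2 := hsymm 2 1
  have s31 : mm 3 1 = mm 1 3 := hsymm 3 1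
  have s41 : mm 4 1 = mm 1 4 := hsymm 4 1
  have s32 : mm 3 2 = mm 2 3 := hsymm 3 2
  have s42 : mm 4 2 = mm 2 4 := hsymm 4 2
  have s43 : mm 4 3 = mm 3 4 := hsymm 4 3
  have e11 : mm 0 1 = mm 1 4 := he1 1 (by decide) (by decide)
  have e12 : mm 0 2 = mm 2 4 := he1 2 (by decide) (by decide)
  have e13 : mm 0 3 = mm 3 4 := he1 3 (by decide) (by decide)
  have z12 : mm 1 2 = 0 := he5 1 2 (by decide) (by decide) (by decide) (by decide) (by decide)
  have z13 : mm 1 3 = 0 := he5 1 3 (by decide) (by decide) (by decide) (by decide) (by decide)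
  have z23 : mm 2 3 = 0 := he5 2 3 (by decide) (by decide) (by decide) (by decide) (by decide)
  have a12 : m 1 + m 2 ≤ d := hi1 1 2 (by decide) (by decide) (by decide) (by decide) (by decide)
  have a13 : m 1 + m 3 ≤ d := hi1 1 3 (by decide) (by decide) (by decide) (by decide) (by decide)
  have a23 : m 2 + m 3 ≤ d := hi1 2 3 (by decide) (by decide) (by decide) (by decide) (by decide)
  have b1 : mm 0 1 ≤ m 1 := hi2 1 (by decide) (by decide)
  have b2 : mm 0 2 ≤ m 2 := hi2 2 (by decide) (by decide)
  have b3 : mm 0 3 ≤ m 3 := hi2 3 (by decide) (by decide)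
  have c1 : m 0 + mm 1 4 ≤ d := hi3 1 (by decide) (by decide)
  have c2 : m 0 + mm 2 4 ≤ d := hi3 2 (by decide) (by decide)
  have c3 : m 0 + mm 3 4 ≤ d := hi3 3 (by decide) (by decide)
  have p1 : 0 ≤ mm 0 1 := hi4 1 (by decide)
  have p2 : 0 ≤ mm 0 2 := hi4 2 (by decide)
  have p3 : 0 ≤ mm 0 3 := hi4 3 (by decide)
  have p4 : 0 ≤ mm 0 4 := hi4 4 (by decide)
  have q1 : m 0 + m 4 + m 1 ≤ 2 * d := hi5 1 (by decide) (by decide)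
  have q2 : m 0 + m 4 + m 2 ≤ 2 * d := hi5 2 (by decide) (by decide)
  have q3 : m 0 + m 4 + m 3 ≤ 2 * d := hi5 3 (by decide) (by decide)
  have r1 : 0 ≤ d - m 0 - m 1 + mm 0 1 := hi6 1 (by decide) (by decide)
  have r2 : 0 ≤ d - m 0 - m 2 + mm 0 2 := hi6 2 (by decide) (by decide)
  have r3 : 0 ≤ d - m 0 - m 3 + mm 0 3 := hi6 3 (by decide) (by decide)
  clear hsymm he1 he5 hi1 hi2 hi3 hi4 hi5 hi6
  refine ⟨⟨?_, ?_, ?_, ?_, ?_, ?_, ?_⟩, by linarith⟩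
  · intro i j hij
    rcases fin5_cases i with rfl | rfl | rfl | rfl | rfl <;> rcases fin5_cases j with rfl | rfl | rfl | rfl | rfl <;> (try exact absurd rfl hij) <;> linarith
  · intro i
    rcases fin5_cases i with rfl | rfl | rfl | rfl | rfl
    · rw [show univ.filter (fun j => j ≠ (0 : Fin 5)) = {1,2,3,4} from by decide,
        Finset.sum_insert (by decide), Finset.sum_insert (by decide),
        Finset.sum_insert (by decide), Finset.sum_singleton]
      linarith
    · rw [show univ.filter (fun j => j ≠ (1 : Fin 5)) = {0,2,3,4} from by decide,
        Finset.sum_insert (by decide), Finset.sum_insert (by decide),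
        Finset.sum_insert (by decide), Finset.sum_singleton]
      linarith
    · rw [show univ.filter (fun j => j ≠ (2 : Fin 5)) = {0,1,3,4} from by decide,
        Finset.sum_insert (by decide), Finset.sum_insert (by decide),
        Finset.sum_insert (by decide), Finset.sum_singleton]
      linarith
    · rw [show univ.filter (fun j => j ≠ (3 : Fin 5)) = {0,1,2,4} from by decide,
        Finset.sum_insert (by decide), Finset.sum_insert (by decide),
        Finset.sum_insert (by decide), Finset.sum_singleton]
      linarith
    · rw [show univ.filter (fun j => j ≠ (4 : Fin 5)) = {0,1,2,3} from by decide,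
        Finset.sum_insert (by decide), Finset.sum_insert (by decide),
        Finset.sum_insert (by decide), Finset.sum_singleton]
      linarith
  · intro i j k hij hik hjk
    rcases fin5_cases i with rfl | rfl | rfl | rfl | rfl <;> rcases fin5_cases j with rfl | rfl | rfl | rfl | rfl <;> (try exact absurd rfl hij) <;>
      rcases fin5_cases k with rfl | rfl | rfl | rfl | rfl <;> (try exact absurd rfl hik) <;> (try exact absurd rfl hjk) <;>
      linarith
  · intro i j k h l hs
    obtain ⟨d1, d2, d3, d4, d5, d6, d7, d8, d9, d10⟩ := five_distinct hs
    clear hs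
    rcases fin5_cases i with rfl | rfl | rfl | rfl | rfl <;> rcases fin5_cases j with rfl | rfl | rfl | rfl | rfl <;> (try exact absurd rfl d1) <;>
      rcases fin5_cases k with rfl | rfl | rfl | rfl | rfl <;> (try exact absurd rfl d2) <;> (try exact absurd rfl d5) <;>
      rcases fin5_cases h with rfl | rfl | rfl | rfl | rfl <;> (try exact absurd rfl d3) <;> (try exact absurd rfl d6) <;>
        (try exact absurd rfl d8) <;>
      rcases fin5_cases l with rfl | rfl | rfl | rfl | rfl <;> (try exact absurd rfl d4) <;> (try exact absurd rfl d7) <;>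
        (try exact absurd rfl d9) <;> (try exact absurd rfl d10) <;>
      linarith
  · intro i j k h l hs
    obtain ⟨d1, d2, d3, d4, d5, d6, d7, d8, d9, d10⟩ := five_distinct hs
    clear hs
    rcases fin5_cases i with rfl | rfl | rfl | rfl | rfl <;> rcases fin5_cases j with rfl | rfl | rfl | rfl | rfl <;> (try exact absurd rfl d1) <;>
      rcases fin5_cases k with rfl | rfl | rfl | rfl | rfl <;> (try exact absurd rfl d2) <;> (try exact absurd rfl d5) <;>
      rcases fin5_cases h with rfl | rfl | rfl | rfl | rfl <;> (try exact absurd rfl d3) <;> (try exact absurd rfl d6) <;>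
        (try exact absurd rfl d8) <;>
      rcases fin5_cases l with rfl | rfl | rfl | rfl | rfl <;> (try exact absurd rfl d4) <;> (try exact absurd rfl d7) <;>
        (try exact absurd rfl d9) <;> (try exact absurd rfl d10) <;>
      linarith
  · intro i j hij
    rcases fin5_cases i with rfl | rfl | rfl | rfl | rfl <;> rcases fin5_cases j with rfl | rfl | rfl | rfl | rfl <;> (try exact absurd rfl hij) <;> linarith
  · intro i j hij
    rcases fin5_cases i with rfl | rfl | rfl | rfl | rfl <;> rcases fin5_cases j with rfl | rfl | rfl | rfl | rfl <;> (try exact absurd rfl hij) <;> linarith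
end
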